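/- arXiv:1906.02735 — 3 statements merged into one kernel-verified Lean document; each statement's English description precedes it below -/
import Mathlib

section
/- Let (Ω,P) be a probability space and (Δ_k)_{k≥0} a sequence of real-valued random variables such that E[∑_{k=0}^∞ |Δ_k|] < ∞. Let N : Ω → ℕ be a random variable, independent of the sequence (Δ_k), such that P(N ≥ k) > 0 for every k ≥ 0. Then the random variable Z = ∑_{k=0}^{N} Δ_k / P(N ≥ k) is integrable and E[Z] = E[∑_{k=0}^∞ Δ_k]; in particular, writing Y_M = ∑_{k=0}^M Δ_k, one has E[Z] = lim_{M→∞} E[Y_M]. -/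
/-!
Write `Z = ∑ₖ 1{N ≥ k} Δₖ / P(N ≥ k)`. Since `Δₖ` is independent of the event `{N ≥ k}`,
`E[1{N ≥ k} Δₖ] = P(N ≥ k) E[Δₖ]`, so the `k`-th reweighted term has the same mean as `Δₖ`,
and (applying the same identity to `|Δₖ|`) the same `L¹` norm. The reweighted series is therefore
absolutely summable in `L¹`, summation and expectation may be exchanged, and
`E[Z] = ∑ₖ E[Δₖ] = E[∑ₖ Δₖ]`; the partial sums of `∑ₖ E[Δₖ]` are the `E[Y_M]`.
-/

open MeasureTheory ProbabilityTheory Filter Set Finset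

section

variable {α E : Type*} {mα : MeasurableSpace α} {μ : Measure α} [NormedAddCommGroup E]

theorem integrable_tsum_of_summable_integral_norm [SecondCountableTopology E]
    [MeasurableSpace E] [BorelSpace E] [CompleteSpace E] {ι : Type*} [Countable ι] {F : ι → α → E}
    (hF_int : ∀ i, Integrable (F i) μ) (hF_sum : Summable fun i ↦ ∫ a, ‖F i a‖ ∂μ) :
    Integrable (fun a ↦ ∑' i, F i a) μ := by
  refine ⟨(AEMeasurable.tsum fun i ↦ (hF_int i).aemeasurable).aestronglyMeasurable, ?_⟩
  calc ∫⁻ a, ‖∑' i, F i a‖ₑ ∂μ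
      ≤ ∫⁻ a, ∑' i, ‖F i a‖ₑ ∂μ := lintegral_mono fun a ↦ enorm_tsum_le_tsum_enorm
    _ = ENNReal.ofReal (∑' i, ∫ a, ‖F i a‖ ∂μ) := by
      rw [lintegral_tsum fun i ↦ (hF_int i).aemeasurable.enorm,
        ENNReal.ofReal_tsum_of_nonneg (fun i ↦ integral_nonneg fun a ↦ norm_nonneg _) hF_sum]
      simp_rw [ofReal_integral_norm_eq_lintegral_enorm (hF_int _)]
    _ < ⊤ := ENNReal.ofReal_lt_top

theorem summable_integral_norm_of_lintegral_tsum_enorm_lt_top {ι : Type*} [Countable ι]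
    {F : ι → α → E} (hF : ∀ i, AEStronglyMeasurable (F i) μ) (h : ∫⁻ a, ∑' i, ‖F i a‖ₑ ∂μ < ⊤) :
    Summable fun i ↦ ∫ a, ‖F i a‖ ∂μ := by
  simp_rw [integral_norm_eq_lintegral_enorm (hF _)]
  refine ENNReal.summable_toReal ?_
  rw [← lintegral_tsum fun i ↦ (hF i).enorm]
  exact h.ne

end

theorem ProbabilityTheory.IndepFun.integral_indicator_div_measureReal
    {Ω 𝓧 𝓨 : Type*} {mΩ : MeasurableSpace Ω} [MeasurableSpace 𝓧] [MeasurableSpace 𝓨]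
    {P : Measure Ω} [IsFiniteMeasure P] {X : Ω → 𝓧} {Y : Ω → 𝓨} (hXY : IndepFun X Y P)
    (hX : AEMeasurable X P) (hY : Measurable Y) {f : 𝓧 → ℝ}
    (hf : AEStronglyMeasurable f (P.map X)) {s : Set 𝓨} (hs : MeasurableSet s)
    (hpos : P (Y ⁻¹' s) ≠ 0) :
    ∫ ω, (Y ⁻¹' s).indicator (fun ω ↦ f (X ω) / P.real (Y ⁻¹' s)) ω ∂P = ∫ ω, f (X ω) ∂P := by
  rw [integral_indicator (hY hs), integral_div,
    ((IndepFun_iff_Indep _ _ _).1 hXY.symm).setIntegral_eq_mul hY.comap_le hX ⟨s, hs, rfl⟩ hf,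
    mul_div_cancel_left₀ _ ((measureReal_ne_zero_iff (measure_ne_top P _)).2 hpos)]

noncomputable def rouletteTerm {Ω : Type*} [MeasurableSpace Ω] (P : Measure Ω) (Δ : ℕ → Ω → ℝ)
    (N : Ω → ℕ) (k : ℕ) : Ω → ℝ :=
  (N ⁻¹' Ici k).indicator fun ω ↦ Δ k ω / P.real (N ⁻¹' Ici k)

section RussianRoulette

variable {Ω : Type*} [MeasurableSpace Ω] {P : Measure Ω} {Δ : ℕ → Ω → ℝ} {N : Ω → ℕ}

theorem sum_range_succ_div_eq_tsum_rouletteTerm (ω : Ω) :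
    ∑ k ∈ range (N ω + 1), Δ k ω / P.real (N ⁻¹' Ici k) = ∑' k, rouletteTerm P Δ N k ω := by
  have hle {k} : k ∈ range (N ω + 1) ↔ ω ∈ N ⁻¹' Ici k := by simp
  rw [tsum_eq_sum (f := (rouletteTerm P Δ N · ω)) fun k hk ↦ indicator_of_notMem (mt hle.2 hk) _]
  exact sum_congr rfl fun k hk ↦
    (indicator_of_mem (hle.1 hk) fun ω ↦ Δ k ω / P.real (N ⁻¹' Ici k)).symm

theorem integrable_rouletteTerm (hN : Measurable N) {k : ℕ} (hΔ : Integrable (Δ k) P) :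
    Integrable (rouletteTerm P Δ N k) P :=
  (hΔ.div_const _).indicator (hN measurableSet_Ici)

variable [IsFiniteMeasure P] {k : ℕ}

theorem integral_rouletteTerm (hind : IndepFun (Δ k) N P) (hΔ : AEMeasurable (Δ k) P)
    (hN : Measurable N) (hpos : P (N ⁻¹' Ici k) ≠ 0) :
    ∫ ω, rouletteTerm P Δ N k ω ∂P = ∫ ω, Δ k ω ∂P :=
  hind.integral_indicator_div_measureReal (f := id) hΔ hN aestronglyMeasurable_id
    measurableSet_Ici hpos

theorem integral_norm_rouletteTerm (hind : IndepFun (Δ k) N P) (hΔ : AEMeasurable (Δ k) P)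
    (hN : Measurable N) (hpos : P (N ⁻¹' Ici k) ≠ 0) :
    ∫ ω, ‖rouletteTerm P Δ N k ω‖ ∂P = ∫ ω, ‖Δ k ω‖ ∂P := by
  simp_rw [rouletteTerm, norm_indicator_eq_indicator_norm, norm_div,
    Real.norm_of_nonneg measureReal_nonneg]
  exact hind.integral_indicator_div_measureReal hΔ hN continuous_norm.aestronglyMeasurable
    measurableSet_Ici hpos

end RussianRoulette

/-- Russian roulette estimator: let `(Δ_k)` be real random variables with
`E[∑_k |Δ_k|] < ∞` and let `N` be an `ℕ`-valued random variable, independent of the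
sequence `(Δ_k)`, with `P(N ≥ k) > 0` for every `k`. Then
`Z = ∑_{k=0}^{N} Δ_k / P(N ≥ k)` is integrable and `E[Z] = E[∑_{k=0}^∞ Δ_k]`;
in particular, with `Y_M = ∑_{k=0}^M Δ_k`, `E[Z] = lim_{M→∞} E[Y_M]`. -/
theorem russian_roulette_unbiased {Ω : Type*} [MeasurableSpace Ω]
    (P : Measure Ω) [IsProbabilityMeasure P]
    (Δ : ℕ → Ω → ℝ) (hΔmeas : ∀ k, Measurable (Δ k))
    (hsum : ∫⁻ ω, (∑' k : ℕ, (‖Δ k ω‖₊ : ENNReal)) ∂P < ⊤)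
    (N : Ω → ℕ) (hNmeas : Measurable N)
    (hindep : IndepFun (fun ω => fun k => Δ k ω) N P)
    (hpos : ∀ k : ℕ, 0 < P {ω | k ≤ N ω}) :
    Integrable
      (fun ω => ∑ k ∈ Finset.range (N ω + 1), Δ k ω / (P {a | k ≤ N a}).toReal) P ∧
    ∫ ω, (∑ k ∈ Finset.range (N ω + 1), Δ k ω / (P {a | k ≤ N a}).toReal) ∂P
      = ∫ ω, (∑' k : ℕ, Δ k ω) ∂P ∧
    Tendsto (fun M : ℕ => ∫ ω, (∑ k ∈ Finset.range (M + 1), Δ k ω) ∂P) atTop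
      (nhds (∫ ω, (∑ k ∈ Finset.range (N ω + 1), Δ k ω / (P {a | k ≤ N a}).toReal) ∂P)) := by
  have hind k : IndepFun (Δ k) N P := hindep.comp (measurable_pi_apply k) measurable_id
  have hΔint k : Integrable (Δ k) P :=
    ⟨(hΔmeas k).aestronglyMeasurable, (lintegral_mono fun ω ↦ ENNReal.le_tsum k).trans_lt hsum⟩
  have hΔsum := summable_integral_norm_of_lintegral_tsum_enorm_lt_top
    (fun k ↦ (hΔmeas k).aestronglyMeasurable) hsum
  have hTint k := integrable_rouletteTerm (P := P) hNmeas (hΔint k)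
  have hTsum : Summable fun k ↦ ∫ ω, ‖rouletteTerm P Δ N k ω‖ ∂P := by
    simpa only [integral_norm_rouletteTerm (hind _) (hΔmeas _).aemeasurable hNmeas
      (hpos _).ne'] using hΔsum
  have hZ : (fun ω ↦ ∑ k ∈ range (N ω + 1), Δ k ω / (P {a | k ≤ N a}).toReal)
      = fun ω ↦ ∑' k, rouletteTerm P Δ N k ω :=
    funext sum_range_succ_div_eq_tsum_rouletteTerm
  have hZmean : HasSum (fun k ↦ ∫ ω, Δ k ω ∂P)
      (∫ ω, ∑ k ∈ range (N ω + 1), Δ k ω / (P {a | k ≤ N a}).toReal ∂P) := by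
    rw [hZ]
    simpa only [integral_rouletteTerm (hind _) (hΔmeas _).aemeasurable hNmeas (hpos _).ne']
      using hasSum_integral_of_summable_integral_norm hTint hTsum
  refine ⟨hZ ▸ integrable_tsum_of_summable_integral_norm hTint hTsum,
    hZmean.unique (hasSum_integral_of_summable_integral_norm hΔint hΔsum), ?_⟩
  simp_rw [integral_finsetSum _ fun k _ ↦ hΔint k]
  exact hZmean.tendsto_sum_nat.comp (tendsto_add_atTop_nat 1)
end

section
/- Let σ(u) = 1/(1 + e^{−u}). For every β > 0, the function LipSwish_β(z) = z·σ(βz)/1.1 is Lipschitz on ℝ with Lipschitz constant at most 1, i.e. |LipSwish_β(z₁) − LipSwish_β(z₂)| ≤ |z₁ − z₂| for all z₁, z₂ ∈ ℝ. -/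
/-!
The derivative of `z ↦ z σ(βz)` is `σ(u) + u σ(u)(1 - σ(u))` with `u = βz`, so it suffices to
bound this function of `u` by `1.1`. Writing `t = e^{-u}` it equals `(1 + t + u t)/(1 + t)²`,
and both bounds reduce to `u ≤ 0.1 eᵘ + 1.2 + 1.1 e⁻ᵘ`. That follows by adding the tangent-line
bounds of `eᵘ` and `e⁻ᵘ` at `u = log 11`, using `log 11 ≤ 2.4`.
-/

/-- The logistic sigmoid `σ(u) = 1/(1 + e^{-u})`. -/
noncomputable def logisticSigmoid (u : ℝ) : ℝ := (1 + Real.exp (-u))⁻¹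

open Real

lemma logisticSigmoid_eq_sigmoid : logisticSigmoid = sigmoid := rfl

lemma exp_mul_sub_add_one_le_exp (c u : ℝ) : exp c * (u - c + 1) ≤ exp u :=
  calc exp c * (u - c + 1) ≤ exp c * exp (u - c) := by gcongr; exact add_one_le_exp _
    _ = exp u := by rw [← exp_add, add_sub_cancel]

lemma log_eleven_le : log 11 ≤ 2.4 := by
  rw [log_le_iff_le_exp (by norm_num)]
  have h_pow : exp 2.4 ^ 5 = exp 1 ^ 12 := by
    rw [← exp_nat_mul, ← exp_nat_mul]; norm_num
  refine le_of_pow_le_pow_left₀ (n := 5) (by norm_num) (exp_pos _).le ?_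
  calc (11 : ℝ) ^ 5 ≤ 2.7182818283 ^ 12 := by norm_num
    _ ≤ exp 1 ^ 12 := by gcongr; exact exp_one_gt_d9.le
    _ = exp 2.4 ^ 5 := h_pow.symm

lemma self_le_tenth_mul_exp_add_exp_neg (u : ℝ) : u ≤ 0.1 * exp u + 1.2 + 1.1 * exp (-u) := by
  have h_pos := exp_mul_sub_add_one_le_exp (log 11) u
  have h_neg := exp_mul_sub_add_one_le_exp (-log 11) (-u)
  rw [exp_log (by norm_num)] at h_pos
  rw [exp_neg, exp_log (by norm_num)] at h_neg
  linarith [log_eleven_le]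

lemma abs_sigmoid_add_mul_deriv_le (u : ℝ) :
    |sigmoid u + u * (sigmoid u * (1 - sigmoid u))| ≤ 1.1 := by
  set t := exp (-u) with ht
  have ht_pos : 0 < t := exp_pos _
  have h_inv : exp u * t = 1 := by rw [ht, ← exp_add, add_neg_cancel, exp_zero]
  have h_eq : sigmoid u + u * (sigmoid u * (1 - sigmoid u)) = (1 + t + u * t) / (1 + t) ^ 2 := by
    rw [sigmoid_def]
    field_simp
    ring
  have h_upper := mul_le_mul_of_nonneg_right (self_le_tenth_mul_exp_add_exp_neg u) ht_pos.le
  have h_lower := mul_le_mul_of_nonneg_right (self_le_tenth_mul_exp_add_exp_neg (-u)) ht_pos.le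
  rw [neg_neg, ← ht] at h_lower
  rw [← ht] at h_upper
  have h_denom : 0 < (1 + t) ^ 2 := by positivity
  rw [h_eq, abs_div, abs_of_pos h_denom, div_le_iff₀ h_denom, abs_le]
  constructor <;> nlinarith

lemma hasDerivAt_mul_sigmoid_mul (β z : ℝ) :
    HasDerivAt (fun z => z * sigmoid (β * z))
      (sigmoid (β * z) + β * z * (sigmoid (β * z) * (1 - sigmoid (β * z)))) z := by
  refine ((hasDerivAt_id' z).mul ((hasDerivAt_sigmoid (β * z)).comp z
    ((hasDerivAt_id' z).const_mul β))).congr_deriv ?_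
  simp only [Function.comp_apply]
  ring

lemma lipschitzWith_mul_sigmoid_mul (β : ℝ) :
    LipschitzWith (11 / 10) (fun z => z * sigmoid (β * z)) := by
  refine lipschitzWith_of_nnnorm_deriv_le
    (fun z => (hasDerivAt_mul_sigmoid_mul β z).differentiableAt) fun z => ?_
  rw [(hasDerivAt_mul_sigmoid_mul β z).deriv, ← NNReal.coe_le_coe, coe_nnnorm, norm_eq_abs]
  convert abs_sigmoid_add_mul_deriv_le (β * z) using 1
  norm_num

theorem lipswish_lipschitz_general (β : ℝ) (z₁ z₂ : ℝ) :
    |z₁ * logisticSigmoid (β * z₁) / 1.1 - z₂ * logisticSigmoid (β * z₂) / 1.1|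
      ≤ |z₁ - z₂| := by
  have h := (lipschitzWith_mul_sigmoid_mul β).dist_le_mul z₁ z₂
  rw [dist_eq_norm, dist_eq_norm, norm_eq_abs, norm_eq_abs] at h
  rw [logisticSigmoid_eq_sigmoid, ← sub_div, abs_div, abs_of_pos (by norm_num : (0 : ℝ) < 1.1),
    div_le_iff₀ (by norm_num)]
  push_cast at h
  linarith

/-- For every `β > 0`, the function `LipSwish_β(z) = z σ(βz)/1.1` is Lipschitz on `ℝ`
with constant at most `1`. -/
theorem lipswish_lipschitz (β : ℝ) (hβ : 0 < β) (z₁ z₂ : ℝ) :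
    |z₁ * logisticSigmoid (β * z₁) / 1.1 - z₂ * logisticSigmoid (β * z₂) / 1.1|
      ≤ |z₁ - z₂| :=
  lipswish_lipschitz_general β z₁ z₂
end

section
/- Let g : ℝ^d → ℝ^d be continuously differentiable with Lip(g) < 1 and set f(x) = x + g(x). Then f is a C¹ diffeomorphism of ℝ^d; for every x, det(I + Dg(x)) > 0; and for every measurable function p : ℝ^d → [0, ∞], the pushforward under f⁻¹ of the measure with Lebesgue density p equals the measure with Lebesgue density x ↦ p(f(x)) · det(I + Dg(x)). -/
open MeasureTheory

/-- The Jacobian matrix of `g : ℝ^d → ℝ^d` at `x`: entry `(i, j)` is `∂gᵢ/∂xⱼ (x)`. -/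
noncomputable def jacobianMatrix {d : ℕ}
    (g : EuclideanSpace ℝ (Fin d) → EuclideanSpace ℝ (Fin d))
    (x : EuclideanSpace ℝ (Fin d)) : Matrix (Fin d) (Fin d) ℝ :=
  Matrix.of fun i j => fderiv ℝ g x (EuclideanSpace.single j 1) i

/-!
Since `Lip(g) < 1`, the map `f = id + g` is antilipschitz, hence injective, and each equation
`x + g x = y` is solved by the fixed point of the contraction `x ↦ y - g x`; the inverse of an
antilipschitz bijection is Lipschitz, so `f` is a homeomorphism. Its derivative `1 + Dg(x)` has
`‖Dg(x)‖ ≤ L < 1`, so it is invertible by the Neumann series and the inverse function theorem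
makes `f⁻¹` as smooth as `f`. The same bound applies to `t • Dg(x)` for `t ∈ [0, 1]`, so
`det (1 + t • Dg(x))` never vanishes along the segment and stays positive from its value `1` at
`t = 0`. The density formula is then the Jacobian change of variables for the bijection `f`.
-/

theorem isUnit_one_add_of_norm_lt_one {R : Type*} [NormedRing R] [HasSummableGeomSeries R]
    {x : R} (h : ‖x‖ < 1) : IsUnit (1 + x) := by
  simpa using isUnit_one_sub_of_norm_lt_one (x := -x) (by rwa [norm_neg])

theorem Homeomorph.invFun_eq_symm {X Y : Type*} [TopologicalSpace X] [TopologicalSpace Y]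
    [Nonempty X] (h : X ≃ₜ Y) : Function.invFun h = h.symm :=
  (Function.LeftInverse.eq_rightInverse h.symm_apply_apply
    (Function.rightInverse_invFun h.surjective)).symm

section LipschitzPerturbation

variable {E : Type*} [NormedAddCommGroup E] {g : E → E} {L : NNReal}

namespace LipschitzWith

theorem antilipschitzWith_id_add (hg : LipschitzWith L g) (hL : L < 1) :
    AntilipschitzWith (1 - L)⁻¹ fun x => x + g x := by
  simpa using AntilipschitzWith.id.add_lipschitzWith hg (by simpa using hL)

theorem surjective_id_add [CompleteSpace E] (hg : LipschitzWith L g) (hL : L < 1) :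
    Function.Surjective fun x => x + g x := by
  intro y
  have hc : ContractingWith L fun x => y - g x :=
    ⟨hL, LipschitzWith.of_dist_le_mul fun a b => by
      rw [dist_sub_left]
      exact hg.dist_le_mul a b⟩
  exact ⟨_, (sub_eq_iff_eq_add.1 (hc.fixedPoint_isFixedPt (f := fun x => y - g x))).symm⟩

noncomputable def idAddHomeomorph [CompleteSpace E] (hg : LipschitzWith L g) (hL : L < 1) :
    E ≃ₜ E :=
  let e := Equiv.ofBijective (fun x => x + g x)
    ⟨(hg.antilipschitzWith_id_add hL).injective, hg.surjective_id_add hL⟩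
  { e with
    continuous_toFun := continuous_id.add hg.continuous
    continuous_invFun := ((hg.antilipschitzWith_id_add hL).to_rightInverse e.right_inv).continuous }

@[simp]
theorem coe_idAddHomeomorph [CompleteSpace E] (hg : LipschitzWith L g) (hL : L < 1) :
    ⇑(hg.idAddHomeomorph hL) = fun x => x + g x :=
  rfl

end LipschitzWith

variable [NormedSpace ℝ E]

theorem hasFDerivAt_id_add {x : E} (hg : DifferentiableAt ℝ g x) :
    HasFDerivAt (fun x => x + g x) (1 + fderiv ℝ g x) x :=
  (hasFDerivAt_id x).add hg.hasFDerivAt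

theorem LipschitzWith.contDiff_symm_idAddHomeomorph [CompleteSpace E] (hg : LipschitzWith L g)
    (hL : L < 1) {n : WithTop ℕ∞} (hsmooth : ContDiff ℝ n g) (hn : n ≠ 0) :
    ContDiff ℝ n (hg.idAddHomeomorph hL).symm := by
  have hunit (x : E) : IsUnit (1 + fderiv ℝ g x) :=
    isUnit_one_add_of_norm_lt_one ((norm_fderiv_le_of_lipschitz ℝ hg).trans_lt hL)
  refine (hg.idAddHomeomorph hL).contDiff_symm
    (f₀' := fun x => ContinuousLinearEquiv.unitsEquiv ℝ E (hunit x).unit)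
    (fun x => ?_) (contDiff_id.add hsmooth)
  exact hasFDerivAt_id_add (hsmooth.differentiable hn x)

end LipschitzPerturbation

theorem ContinuousLinearMap.det_one_add_pos {E : Type*} [NormedAddCommGroup E]
    [NormedSpace ℝ E] [FiniteDimensional ℝ E] {A : E →L[ℝ] E} (hA : ‖A‖ < 1) :
    0 < (1 + A).det := by
  have := FiniteDimensional.complete ℝ E
  have hne (t : ℝ) (ht : t ∈ Set.Icc (0 : ℝ) 1) : (1 + t • A).det ≠ 0 := by
    have hnorm : ‖t • A‖ < 1 := by
      rw [norm_smul, Real.norm_of_nonneg ht.1]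
      nlinarith [norm_nonneg A, ht.2]
    exact ((LinearMap.isUnit_iff_isUnit_det _).1
      ((isUnit_one_add_of_norm_lt_one hnorm).map toLinearMapRingHom)).ne_zero
  have hcont : Continuous fun t : ℝ => (1 + t • A).det :=
    continuous_det.comp (by fun_prop)
  by_contra! hle
  obtain ⟨t, ht, hzero⟩ := intermediate_value_Icc' zero_le_one hcont.continuousOn
    (show (0 : ℝ) ∈ Set.Icc _ _ from ⟨by simpa using hle, by simp [ContinuousLinearMap.det]⟩)
  exact hne t ht hzero

theorem MeasurableEquiv.map_symm_withDensity_eq_withDensity_mul_abs_det {E : Type*}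
    [NormedAddCommGroup E] [NormedSpace ℝ E] [FiniteDimensional ℝ E] [MeasurableSpace E]
    [BorelSpace E] (μ : Measure E) [μ.IsAddHaarMeasure] (f : E ≃ᵐ E) {f' : E → E →L[ℝ] E}
    (hf' : ∀ x, HasFDerivAt f (f' x) x) (p : E → ENNReal) :
    Measure.map f.symm (μ.withDensity p) =
      μ.withDensity fun x => p (f x) * ENNReal.ofReal |(f' x).det| := by
  ext s hs
  rw [f.symm.map_apply, ← f.image_eq_preimage_symm,
    withDensity_apply _ (f.measurableSet_image.2 hs), withDensity_apply _ hs,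
    lintegral_image_eq_lintegral_abs_det_fderiv_mul μ hs (fun x _ => (hf' x).hasFDerivWithinAt)
      f.injective.injOn]
  simp_rw [mul_comm]

theorem det_one_add_jacobianMatrix {d : ℕ}
    (g : EuclideanSpace ℝ (Fin d) → EuclideanSpace ℝ (Fin d)) (x : EuclideanSpace ℝ (Fin d)) :
    (1 + jacobianMatrix g x).det = (1 + fderiv ℝ g x).det := by
  set b := (EuclideanSpace.basisFun (Fin d) ℝ).toBasis
  have hjac : LinearMap.toMatrix b b (fderiv ℝ g x) = jacobianMatrix g x := by
    ext i j
    simp [b, LinearMap.toMatrix_apply, jacobianMatrix]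
  rw [ContinuousLinearMap.det, ← LinearMap.det_toMatrix b, ContinuousLinearMap.toLinearMap_add,
    map_add, ContinuousLinearMap.toLinearMap_one, LinearMap.toMatrix_one, hjac]

/-- Change of variables for invertible residual maps: if `g` is `C¹` with `Lip(g) < 1`
and `f(x) = x + g(x)`, then `f` is a `C¹` diffeomorphism of `ℝ^d`, `det(I + Dg(x)) > 0`
for every `x`, and for every measurable `p : ℝ^d → [0,∞]` the pushforward under `f⁻¹`
of the measure with Lebesgue density `p` has Lebesgue density
`x ↦ p(f(x)) · det(I + Dg(x))`. -/
theorem residual_block_change_of_variables {d : ℕ}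
    (g : EuclideanSpace ℝ (Fin d) → EuclideanSpace ℝ (Fin d))
    (L : NNReal) (hL : L < 1) (hg : LipschitzWith L g) (hsmooth : ContDiff ℝ 1 g) :
    Function.Bijective (fun x => x + g x) ∧
    ContDiff ℝ 1 (fun x => x + g x) ∧
    ContDiff ℝ 1 (Function.invFun (fun x => x + g x)) ∧
    (∀ x, 0 < (1 + jacobianMatrix g x).det) ∧
    ∀ p : EuclideanSpace ℝ (Fin d) → ENNReal, Measurable p →
      Measure.map (Function.invFun (fun x => x + g x)) (volume.withDensity p)
        = volume.withDensity
            (fun x => p (x + g x) * ENNReal.ofReal ((1 + jacobianMatrix g x).det)) := by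
  set F := hg.idAddHomeomorph hL
  have hinv : Function.invFun (fun x => x + g x) = F.symm := F.invFun_eq_symm
  have hdet_pos (x) : 0 < (1 + jacobianMatrix g x).det := by
    rw [det_one_add_jacobianMatrix]
    exact ContinuousLinearMap.det_one_add_pos ((norm_fderiv_le_of_lipschitz ℝ hg).trans_lt hL)
  refine ⟨F.bijective, contDiff_id.add hsmooth,
    hinv ▸ hg.contDiff_symm_idAddHomeomorph hL hsmooth one_ne_zero, hdet_pos, fun p _ => ?_⟩
  have hcov := F.toMeasurableEquiv.map_symm_withDensity_eq_withDensity_mul_abs_det volume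
    (fun x => hasFDerivAt_id_add (hsmooth.differentiable one_ne_zero x)) p
  simp only [Homeomorph.toMeasurableEquiv_symm_coe, Homeomorph.toMeasurableEquiv_coe,
    LipschitzWith.coe_idAddHomeomorph, F] at hcov
  rw [hinv, hcov]
  simp_rw [← det_one_add_jacobianMatrix, abs_of_pos (hdet_pos _)]
end
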